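/- Let $g_0,\dots,g_N, x_0,\dots,x_N \in k[u_1,\dots,u_r]$ satisfy $\sum_j g_j D_I x_j = 0$ for all $|I| \le m-1$ (so in particular for all $|I| \le m-2$). For each $k$, the contraction of $\phi_m(g) = \sum_{|I|=m}(\sum_j g_j D_I x_j) U^I$ against the $k$-th variable, namely $\sum_{|I| = m,\, i_k \ge 1} i_k \big(\sum_j g_j D_I x_j\big) U^{I^k}$ with $I^k = (i_1,\dots,i_k - 1,\dots,i_r)$, lies in the linear span of $\{\phi_{m-1}(h) : h = (h_0,\dots,h_N),\ \sum_j h_j D_I x_j = 0 \text{ for all } |I| \le m-2\}$, where $\phi_{m-1}(h) = \sum_{|I| = m-1}(\sum_j h_j D_I x_j) U^I$. -/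

import Mathlib

open MvPolynomial Finset

/-- The multivariate Hasse derivative `D_I` on `k[u_1,…,u_r]`, defined on monomials by
`D_I(u^J) = (∏ t, (J t).choose (I t)) · u^(J-I)`. -/
noncomputable def hasse {k : Type*} [CommRing k] {r : ℕ} (I : Fin r → ℕ)
    (p : MvPolynomial (Fin r) k) : MvPolynomial (Fin r) k :=
  (AddMonoidAlgebra.coeff p).sum fun J c =>
    MvPolynomial.monomial (J - Finsupp.equivFunOnFinite.symm I)
      (c * ((∏ t, (J t).choose (I t) : ℕ) : k))

/-- The Finset of multi-indices `I : Fin r → ℕ` of total degree exactly `d`. -/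
noncomputable def degIdx (r d : ℕ) : Finset (Fin r → ℕ) :=
  (Fintype.piFinset fun _ : Fin r => Finset.range (d + 1)).filter fun I => ∑ s, I s = d

section aux
variable {k : Type*} [CommRing k] {r : ℕ}

lemma mem_degIdx {r d : ℕ} {I : Fin r → ℕ} : I ∈ degIdx r d ↔ ∑ s, I s = d := by
  unfold degIdx
  simp only [mem_filter, Fintype.mem_piFinset, mem_range]
  refine ⟨fun h => h.2, fun h => ⟨fun s => ?_, h⟩⟩
  have := Finset.single_le_sum (f := I) (fun i _ => Nat.zero_le _) (mem_univ s)
  omega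

lemma hasse_monomial (I : Fin r → ℕ) (J : Fin r →₀ ℕ) (c : k) :
    hasse I (monomial J c) =
      monomial (J - Finsupp.equivFunOnFinite.symm I)
        (c * ((∏ t, (J t).choose (I t) : ℕ) : k)) := by
  unfold hasse
  exact Finsupp.sum_single_index (by simp)

lemma hasse_add (I : Fin r → ℕ) (p q : MvPolynomial (Fin r) k) :
    hasse I (p + q) = hasse I p + hasse I q := by
  unfold hasse
  exact Finsupp.sum_add_index (f := AddMonoidAlgebra.coeff p) (g := AddMonoidAlgebra.coeff q) (by simp) (by intros; rw [add_mul, map_add])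

lemma choose_key (t : Fin r) (I : Fin r → ℕ) (J : Fin r →₀ ℕ) :
    (∏ s, (J s).choose (I s)) * (J t - I t)
      = (I t + 1) * ∏ s, (J s).choose (I s + Finsupp.single t 1 s) := by
  have h1 : ∀ s ∈ univ.erase t,
      (J s).choose (I s + Finsupp.single t 1 s) = (J s).choose (I s) := by
    intro s hs
    rw [Finsupp.single_apply, if_neg (Finset.ne_of_mem_erase hs).symm, add_zero]
  have e2 : (∏ s, (J s).choose (I s + Finsupp.single t 1 s))
      = (J t).choose (I t + 1)
        * ∏ s ∈ univ.erase t, (J s).choose (I s) := by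
    rw [← Finset.mul_prod_erase univ
        (fun s => (J s).choose (I s + Finsupp.single t 1 s)) (mem_univ t),
      Finset.prod_congr rfl h1, Finsupp.single_apply, if_pos rfl]
  rw [e2, ← Finset.mul_prod_erase univ (fun s => (J s).choose (I s)) (mem_univ t),
    show (I t + 1) * ((J t).choose (I t + 1) * ∏ s ∈ univ.erase t, (J s).choose (I s))
      = ((J t).choose (I t + 1) * (I t + 1)) * ∏ s ∈ univ.erase t, (J s).choose (I s) by ring,
    Nat.choose_succ_right_eq]
  ring

lemma equivFun_symm_apply (I : Fin r → ℕ) (s : Fin r) :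
    (Finsupp.equivFunOnFinite.symm I) s = I s := rfl

lemma pderiv_hasse (t : Fin r) (I : Fin r → ℕ) (p : MvPolynomial (Fin r) k) :
    pderiv t (hasse I p)
      = (I t + 1) • hasse (fun s => I s + Finsupp.single t 1 s) p := by
  induction p using MvPolynomial.induction_on' with
  | monomial J c =>
    rw [hasse_monomial, pderiv_monomial, hasse_monomial, smul_monomial]
    have hidx : J - Finsupp.equivFunOnFinite.symm I - Finsupp.single t 1
        = J - Finsupp.equivFunOnFinite.symm (fun s => I s + Finsupp.single t 1 s) := by
      ext s
      rw [Finsupp.tsub_apply, Finsupp.tsub_apply, Finsupp.tsub_apply,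
        equivFun_symm_apply, equivFun_symm_apply]
      omega
    rw [hidx]
    congr 1
    rw [Finsupp.tsub_apply, equivFun_symm_apply, nsmul_eq_mul, mul_assoc,
      ← Nat.cast_mul, choose_key t I J, Nat.cast_mul]
    push_cast
    ring
  | add p q hp hq =>
    rw [hasse_add, map_add, hp, hq, hasse_add, smul_add]
end aux

/-- If `∑_j g_j D_I x_j = 0` for all `|I| ≤ m-1`, then for each `t` the contraction of
`φ_m(g) = ∑_{|I|=m} (∑_j g_j D_I x_j) U^I` against the `t`-th variable, namely
`∑_{|I|=m, i_t ≥ 1} i_t (∑_j g_j D_I x_j) U^{I^t}`, lies in the linear span of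
`{φ_{m-1}(h) : ∑_j h_j D_I x_j = 0 for all |I| ≤ m-2}`. -/
theorem stmt17 {k : Type*} [Field k] {r N m : ℕ} (hm : 2 ≤ m)
    (g x : Fin (N + 1) → MvPolynomial (Fin r) k)
    (H : ∀ I : Fin r → ℕ, (∑ s, I s) + 1 ≤ m → ∑ j, g j * hasse I (x j) = 0)
    (t : Fin r) :
    (∑ I ∈ (degIdx r m).filter (fun I => 1 ≤ I t),
        (MvPolynomial.monomial (Finsupp.equivFunOnFinite.symm I - Finsupp.single t 1)
          ((I t) • ∑ j, g j * hasse I (x j)) :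
          MvPolynomial (Fin r) (MvPolynomial (Fin r) k)))
      ∈ Submodule.span (MvPolynomial (Fin r) k)
        {p : MvPolynomial (Fin r) (MvPolynomial (Fin r) k) |
          ∃ h : Fin (N + 1) → MvPolynomial (Fin r) k,
            (∀ I : Fin r → ℕ, (∑ s, I s) + 2 ≤ m → ∑ j, h j * hasse I (x j) = 0) ∧
            p = ∑ I ∈ degIdx r (m - 1),
              MvPolynomial.monomial (Finsupp.equivFunOnFinite.symm I)
                (∑ j, h j * hasse I (x j))} := by
  classical
  have hsum_e : ∑ s, (Finsupp.single t 1 : Fin r →₀ ℕ) s = 1 := by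
    simp [Finsupp.single_apply]
  -- differentiating the relation H
  have key : ∀ I : Fin r → ℕ, (∑ s, I s) + 1 ≤ m →
      ∑ j, -(pderiv t (g j)) * hasse I (x j)
        = (I t + 1) • ∑ j, g j * hasse (fun s => I s + Finsupp.single t 1 s) (x j) := by
    intro I hI
    have h0 := congrArg (pderiv t) (H I hI)
    rw [map_zero, map_sum] at h0
    simp only [pderiv_mul, pderiv_hasse, mul_smul_comm, Finset.sum_add_distrib,
      ← Finset.smul_sum] at h0
    simp only [neg_mul, Finset.sum_neg_distrib] at *
    exact neg_eq_of_add_eq_zero_right h0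
  apply Submodule.subset_span
  refine ⟨fun j => -(pderiv t (g j)), ?_, ?_⟩
  · intro I hI
    rw [key I (by omega), H _ (by rw [Finset.sum_add_distrib, hsum_e]; omega), smul_zero]
  · have hRHS : (∑ I ∈ degIdx r (m - 1),
          MvPolynomial.monomial (Finsupp.equivFunOnFinite.symm I)
            (∑ j, (fun j => -(pderiv t (g j))) j * hasse I (x j)) :
          MvPolynomial (Fin r) (MvPolynomial (Fin r) k))
        = ∑ J ∈ degIdx r (m - 1),
            MvPolynomial.monomial (Finsupp.equivFunOnFinite.symm J)
              ((J t + 1) • ∑ j, g j * hasse (fun s => J s + Finsupp.single t 1 s) (x j)) := by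
      refine Finset.sum_congr rfl fun J hJ => ?_
      rw [mem_degIdx] at hJ
      congr 1
      exact key J (by omega)
    rw [hRHS]
    refine Finset.sum_nbij' (fun I => fun s => I s - Finsupp.single t 1 s)
      (fun J => fun s => J s + Finsupp.single t 1 s) ?_ ?_ ?_ ?_ ?_
    · intro I hI
      rw [Finset.mem_filter, mem_degIdx] at hI
      rw [mem_degIdx, Finset.sum_tsub_distrib, hI.1, hsum_e]
      intro s _
      rw [Finsupp.single_apply]
      split
      · rename_i h; subst h; exact hI.2
      · exact Nat.zero_le _
    · intro J hJ
      rw [mem_degIdx] at hJ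
      rw [Finset.mem_filter, mem_degIdx]
      dsimp only
      rw [Finset.sum_add_distrib, hsum_e, hJ, Finsupp.single_eq_same]
      exact ⟨by omega, by omega⟩
    · intro I hI
      rw [Finset.mem_filter] at hI
      funext s
      dsimp only
      rw [Finsupp.single_apply]
      split
      · rename_i h; subst h; have := hI.2; omega
      · omega
    · intro J _
      funext s
      dsimp only
      omega
    · intro I hI
      rw [Finset.mem_filter] at hI
      dsimp only
      have h1 : (fun s => I s - (Finsupp.single t 1 : Fin r →₀ ℕ) s
            + (Finsupp.single t 1 : Fin r →₀ ℕ) s) = I := by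
        funext s
        rw [Finsupp.single_apply]
        split
        · rename_i h; subst h; have := hI.2; omega
        · omega
      have h2 : I t - (Finsupp.single t 1 : Fin r →₀ ℕ) t + 1 = I t := by
        rw [Finsupp.single_eq_same]; have := hI.2; omega
      have hidx : Finsupp.equivFunOnFinite.symm I - Finsupp.single t 1
          = Finsupp.equivFunOnFinite.symm (fun s => I s - (Finsupp.single t 1 : Fin r →₀ ℕ) s) := by
        apply Finsupp.ext
        intro s
        rw [Finsupp.tsub_apply, equivFun_symm_apply, equivFun_symm_apply]
      rw [h1, h2, hidx]
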